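/- arXiv:1405.6734 — 6 statements merged into one kernel-verified Lean document; each statement's English description precedes it below -/
import Mathlib

section
/- In the Verma module V(h,c) over the Virasoro algebra, a vector w₂ = e_1² v + a·e_2 v in the degree-2 subspace satisfies e_{-1} w₂ = 0 if and only if a = -(2/3)(2h+1) (assuming the coefficient of e_1² v is normalized to 1). -/
/-!
Commuting `e₋₁` past `e₁` and `e₂` with the Virasoro relations, and using `e₋₁ v = 0`,
`e₀ v = h v`, gives `e₋₁ e₁² v = (4h + 2) e₁ v` and `e₋₁ e₂ v = 3 e₁ v`. Hence
`e₋₁ w₂ = (4h + 2 + 3a) e₁ v`, which vanishes exactly when `a = -(2/3)(2h + 1)`, as `e₁ v ≠ 0`.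
-/

section

variable {M : Type*} [AddCommGroup M] [Module ℂ M]

def IsVirasoroRep (e : ℤ → M →ₗ[ℂ] M) (c : ℂ) : Prop :=
  ∀ i j : ℤ, ∀ m : M,
    e i (e j m) - e j (e i m) =
      ((j : ℂ) - (i : ℂ)) • e (i + j) m +
        (if i + j = 0 then (((j : ℂ) ^ 3 - (j : ℂ)) / 12) * c else 0) • m

namespace IsVirasoroRep

variable {e : ℤ → M →ₗ[ℂ] M} {c : ℂ}

theorem apply_zero_apply_of_apply_zero_eq (H : IsVirasoroRep e c) {h : ℂ} {m : M}
    (hm : e 0 m = h • m) (n : ℤ) : e 0 (e n m) = (h + n) • e n m := by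
  have hcomm := H 0 n m
  split_ifs at hcomm with hn
  · obtain rfl : n = 0 := by simpa using hn
    simp [hm]
  · rw [zero_smul, add_zero, sub_eq_iff_eq_add, hm, map_smul, zero_add] at hcomm
    rw [hcomm, add_smul]
    module

theorem apply_neg_one_apply_one (H : IsVirasoroRep e c) (m : M) :
    e (-1) (e 1 m) = e 1 (e (-1) m) + (2 : ℂ) • e 0 m := by
  have hcomm := H (-1) 1 m
  norm_num at hcomm
  rw [← hcomm]
  abel

theorem apply_neg_one_apply_two (H : IsVirasoroRep e c) (m : M) :
    e (-1) (e 2 m) = e 2 (e (-1) m) + (3 : ℂ) • e 1 m := by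
  have hcomm := H (-1) 2 m
  norm_num at hcomm
  rw [← hcomm]
  abel

variable {h : ℂ} {v : M}

theorem apply_neg_one_apply_one_apply_one (H : IsVirasoroRep e c)
    (hv0 : e 0 v = h • v) (hv : e (-1) v = 0) :
    e (-1) (e 1 (e 1 v)) = (4 * h + 2) • e 1 v := by
  have hv1 : e (-1) (e 1 v) = (2 * h) • v := by
    rw [H.apply_neg_one_apply_one, hv, hv0, map_zero, zero_add, smul_smul]
  rw [H.apply_neg_one_apply_one, hv1, H.apply_zero_apply_of_apply_zero_eq hv0, map_smul]
  module

theorem apply_neg_one_level_two (H : IsVirasoroRep e c)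
    (hv0 : e 0 v = h • v) (hv : e (-1) v = 0) (a : ℂ) :
    e (-1) (e 1 (e 1 v) + a • e 2 v) = (4 * h + 2 + 3 * a) • e 1 v := by
  rw [map_add, map_smul, H.apply_neg_one_apply_one_apply_one hv0 hv,
    H.apply_neg_one_apply_two, hv, map_zero, zero_add]
  module

end IsVirasoroRep

end

/-- In the Verma module `V(h,c)`, the degree-2 vector `w₂ = e₁² v + a • e₂ v` is
annihilated by `e₋₁` if and only if `a = -(2/3)(2h+1)`. (The vector `e 1 v` is nonzero
since the Verma module is free over `U(L₁)`.) -/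
theorem level_two_e_neg_one_condition
    (M : Type*) [AddCommGroup M] [Module ℂ M]
    (e : ℤ → M →ₗ[ℂ] M) (c h : ℂ) (v : M)
    (hrel : ∀ i j : ℤ, ∀ m : M,
      e i (e j m) - e j (e i m) =
        ((j : ℂ) - (i : ℂ)) • e (i + j) m +
          (if i + j = 0 then (((j : ℂ) ^ 3 - (j : ℂ)) / 12) * c else 0) • m)
    (hv0 : e 0 v = h • v)
    (hvneg : ∀ i : ℤ, i < 0 → e i v = 0)
    (h1 : e 1 v ≠ 0)
    (a : ℂ) :
    e (-1) (e 1 (e 1 v) + a • e 2 v) = 0 ↔ a = -(2/3) * (2*h + 1) := by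
  have H : IsVirasoroRep e c := hrel
  rw [H.apply_neg_one_level_two hv0 (hvneg (-1) (by norm_num)), smul_eq_zero, or_iff_left h1]
  constructor
  · intro hEq
    linear_combination hEq / 3
  · intro hEq
    linear_combination 3 * hEq
end

section
/- In the Verma module V(h,c), the vector w₂ = e_1² v - (2/3)(2h+1) e_2 v satisfies e_{-2} w₂ = 0 if and only if 6h - (2/3)(2h+1)(4h + c/2) = 0. -/
/-!
Commute `e₋₂` to the right: on the highest weight vector `v` only the brackets survive, giving
`e₋₂ e₁² v = 6h v` and `e₋₂ e₂ v = (4h + c/2) v`, so `e₋₂ w₂` is the scalar of the theorem times `v`,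
and `v ≠ 0`.
-/

namespace Virasoro

variable {K M : Type*} [Field K] [AddCommGroup M] [Module K M]

def BracketRel (e : ℤ → M →ₗ[K] M) (c : K) : Prop :=
  ∀ i j : ℤ, ∀ m : M,
    e i (e j m) - e j (e i m) =
      ((j : K) - (i : K)) • e (i + j) m +
        (if i + j = 0 then (((j : K) ^ 3 - (j : K)) / 12) * c else 0) • m

variable {e : ℤ → M →ₗ[K] M} {c h : K} {v : M}

theorem e_neg_one_e_one_of_highestWeight (hrel : BracketRel e c) (hv0 : e 0 v = h • v)
    (hvneg : ∀ i : ℤ, i < 0 → e i v = 0) :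
    e (-1) (e 1 v) = (2 * h) • v := by
  have hbr := hrel (-1) 1 v
  simp only [hvneg (-1) (by norm_num), map_zero, sub_zero] at hbr
  rw [hbr]
  norm_num [hv0, smul_smul]

theorem e_neg_two_e_one_of_highestWeight (hrel : BracketRel e c)
    (hvneg : ∀ i : ℤ, i < 0 → e i v = 0) :
    e (-2) (e 1 v) = 0 := by
  simpa [hvneg (-1) (by norm_num), hvneg (-2) (by norm_num)] using hrel (-2) 1 v

theorem e_neg_two_e_one_sq_of_highestWeight (hrel : BracketRel e c) (hv0 : e 0 v = h • v)
    (hvneg : ∀ i : ℤ, i < 0 → e i v = 0) :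
    e (-2) (e 1 (e 1 v)) = (6 * h) • v := by
  have hbr := hrel (-2) 1 (e 1 v)
  rw [e_neg_two_e_one_of_highestWeight hrel hvneg, map_zero, sub_zero] at hbr
  rw [hbr]
  norm_num [e_neg_one_e_one_of_highestWeight hrel hv0 hvneg, smul_smul]
  module

theorem e_neg_two_e_two_of_highestWeight [CharZero K] (hrel : BracketRel e c)
    (hv0 : e 0 v = h • v) (hvneg : ∀ i : ℤ, i < 0 → e i v = 0) :
    e (-2) (e 2 v) = (4 * h + c / 2) • v := by
  have hbr := hrel (-2) 2 v
  simp only [hvneg (-2) (by norm_num), map_zero, sub_zero] at hbr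
  rw [hbr]
  norm_num [hv0, smul_smul]
  module

theorem e_neg_two_levelTwo_of_highestWeight [CharZero K] (hrel : BracketRel e c)
    (hv0 : e 0 v = h • v) (hvneg : ∀ i : ℤ, i < 0 → e i v = 0) :
    e (-2) (e 1 (e 1 v) - ((2 / 3) * (2 * h + 1)) • e 2 v) =
      (6 * h - (2 / 3) * (2 * h + 1) * (4 * h + c / 2)) • v := by
  rw [map_sub, map_smul, e_neg_two_e_one_sq_of_highestWeight hrel hv0 hvneg,
    e_neg_two_e_two_of_highestWeight hrel hv0 hvneg, smul_smul, ← sub_smul]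

end Virasoro

/-- In the Verma module `V(h,c)`, the vector `w₂ = e₁² v - (2/3)(2h+1) e₂ v` is
annihilated by `e₋₂` if and only if `6h - (2/3)(2h+1)(4h + c/2) = 0`. -/
theorem level_two_e_neg_two_condition
    (M : Type*) [AddCommGroup M] [Module ℂ M]
    (e : ℤ → M →ₗ[ℂ] M) (c h : ℂ) (v : M)
    (hrel : ∀ i j : ℤ, ∀ m : M,
      e i (e j m) - e j (e i m) =
        ((j : ℂ) - (i : ℂ)) • e (i + j) m +
          (if i + j = 0 then (((j : ℂ) ^ 3 - (j : ℂ)) / 12) * c else 0) • m)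
    (hv0 : e 0 v = h • v)
    (hvneg : ∀ i : ℤ, i < 0 → e i v = 0)
    (hv : v ≠ 0) :
    e (-2) (e 1 (e 1 v) - ((2/3) * (2*h + 1)) • e 2 v) = 0 ↔
      6*h - (2/3) * (2*h + 1) * (4*h + c/2) = 0 := by
  rw [Virasoro.e_neg_two_levelTwo_of_highestWeight hrel hv0 hvneg,
    smul_eq_zero, or_iff_left hv]
end

section
/- Define v^{(0)} = v in the Verma module V(h,c) with c = 13 + 6t + 6t^{-1} and h = -((p-1+t)(t^{-1}(p+1)+3))/4, and recursively v^{(k)} = (2t Σ_{j=1}^{k} ((j-1)(2t-1) + 2k - 2p - 1) e_j v^{(k-j)}) / (k(2p-k)(k-p-t)) for 1 ≤ k ≤ 2p-1 (assuming t ∉ {p-1, p-2, ..., p-(2p-1)}, t ≠ 0). Then e_{-1} v^{(k)} = -(p + 2 - k + 3t) v^{(k-1)} for all k = 1, ..., 2p-1. -/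
/-!
Since `[e₀, e_j] = j e_j`, each `e_j v⁽ᵏ⁻ʲ⁾`, and hence `v⁽ᵏ⁾`, is an `e₀`-eigenvector of eigenvalue
`h + k`. For `|i| ≤ 1` the central term of `[e_i, e_j]` vanishes, so `[e₋₁, e_j] = (j + 1) e_{j-1}`.
Write the recursion as `D_k v⁽ᵏ⁾ = 2t S_k` with `S_k = Σ_j a_{k,j} e_j v⁽ᵏ⁻ʲ⁾`. Applying `e₋₁` and using
the claim for smaller indices, the terms regroup, through the identity
`a_{k,j} b_{k-j} + (j + 2) a_{k,j+1} = (k + 1 - p - 3t) a_{k-1,j}` for `b_k = -(p + 2 - k + 3t)`, into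
`e₋₁ S_k = 2 a_{k,1} (h + k - 1) v⁽ᵏ⁻¹⁾ + (k + 1 - p - 3t) S_{k-1}`. As `2t S_{k-1} = D_{k-1} v⁽ᵏ⁻¹⁾`,
`D_k e₋₁ v⁽ᵏ⁾ = D_k b_k v⁽ᵏ⁻¹⁾` reduces to a rational identity in `t`, and `D_k ≠ 0` can be cancelled.
-/

open Finset

section Virasoro

variable {M : Type*} [AddCommGroup M] [Module ℂ M]

def IsVirasoroAction (c : ℂ) (e : ℤ → M →ₗ[ℂ] M) : Prop :=
  ∀ i j : ℤ, ∀ m : M,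
    e i (e j m) - e j (e i m) =
      ((j : ℂ) - (i : ℂ)) • e (i + j) m +
        (if i + j = 0 then (((j : ℂ) ^ 3 - (j : ℂ)) / 12) * c else 0) • m

def vseqCoeff (p : ℕ) (t : ℂ) (k j : ℕ) : ℂ :=
  ((j : ℂ) - 1) * (2*t - 1) + 2*(k : ℂ) - 2*(p : ℂ) - 1

def vseqDenom (p : ℕ) (t : ℂ) (k : ℕ) : ℂ :=
  (k : ℂ) * (2*(p : ℂ) - (k : ℂ)) * ((k : ℂ) - (p : ℂ) - t)

def vseqSum (p : ℕ) (t : ℂ) (e : ℤ → M →ₗ[ℂ] M) (w : ℕ → M) (k : ℕ) : M :=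
  ∑ j ∈ Icc 1 k, vseqCoeff p t k j • e (j : ℤ) (w (k - j))

variable {p : ℕ} {t c : ℂ} {e : ℤ → M →ₗ[ℂ] M}

theorem vseqCoeff_mul_add (m i : ℕ) :
    vseqCoeff p t (m + 1) (i + 1) * (-((p : ℂ) + 2 - ((m : ℂ) - i) + 3*t)) +
        vseqCoeff p t (m + 1) (i + 2) * ((i : ℂ) + 3) =
      ((m : ℂ) + 2 - p - 3*t) * vseqCoeff p t m (i + 1) := by
  simp only [vseqCoeff]
  push_cast
  ring

theorem vseqDenom_succ_mul (ht : t ≠ 0) (m : ℕ) :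
    2*t * (2 * vseqCoeff p t (m + 1) 1 *
          (-(((p : ℂ) - 1 + t) * (t⁻¹ * ((p : ℂ) + 1) + 3)) / 4 + m)) +
        ((m : ℂ) + 2 - p - 3*t) * vseqDenom p t m =
      vseqDenom p t (m + 1) * (-((p : ℂ) + 2 - ((m + 1 : ℕ) : ℂ) + 3*t)) := by
  simp only [vseqCoeff, vseqDenom]
  push_cast
  field_simp
  ring

theorem vseqDenom_ne_zero (htg : ∀ r : ℕ, 1 ≤ r → r ≤ 2*p - 1 → t ≠ (p : ℂ) - (r : ℂ))
    {k : ℕ} (hk1 : 1 ≤ k) (hk2 : k ≤ 2*p - 1) : vseqDenom p t k ≠ 0 := by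
  have hk : (k : ℂ) ≠ 0 := Nat.cast_ne_zero.mpr (by omega)
  have hpk : 2*(p : ℂ) - k ≠ 0 := by
    rw [sub_ne_zero]
    exact_mod_cast (by omega : 2*p ≠ k)
  have hkpt : (k : ℂ) - p - t ≠ 0 := by
    have h := htg (2*p - k) (by omega) (by omega)
    rw [Nat.cast_sub (by omega), Nat.cast_mul, Nat.cast_ofNat] at h
    contrapose! h
    linear_combination -h
  exact mul_ne_zero (mul_ne_zero hk hpk) hkpt

theorem vseqSum_eq_sum_range (w : ℕ → M) (k : ℕ) :
    vseqSum p t e w k =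
      ∑ i ∈ range k, vseqCoeff p t k (i + 1) • e ((i + 1 : ℕ) : ℤ) (w (k - 1 - i)) := by
  rw [vseqSum, ← Ico_add_one_right_eq_Icc, sum_Ico_eq_sum_range, Nat.add_sub_cancel]
  refine sum_congr rfl fun i _ => ?_
  rw [add_comm 1 i, Nat.sub_sub, add_comm 1 i]

namespace IsVirasoroAction

theorem apply_apply_of_abs_le_one (he : IsVirasoroAction c e) {i : ℤ} (hi : |i| ≤ 1) (j : ℤ)
    (w : M) : e i (e j w) = e j (e i w) + ((j : ℂ) - i) • e (i + j) w := by
  have hcentral : (if i + j = 0 then (((j : ℂ) ^ 3 - (j : ℂ)) / 12) * c else 0) = 0 := by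
    split_ifs with hij
    · rw [abs_le] at hi
      obtain rfl | rfl | rfl : j = -1 ∨ j = 0 ∨ j = 1 := by omega
      all_goals norm_num
    · rfl
  rw [← sub_eq_iff_eq_add', he, hcentral, zero_smul, add_zero]

theorem neg_one_apply_apply (he : IsVirasoroAction c e) (j : ℤ) (w : M) :
    e (-1) (e j w) = e j (e (-1) w) + ((j : ℂ) + 1) • e (j - 1) w := by
  rw [he.apply_apply_of_abs_le_one (by norm_num), neg_add_eq_sub]
  push_cast
  rw [sub_neg_eq_add]

theorem apply_mem_eigenspace (he : IsVirasoroAction c e) (j : ℤ) {μ : ℂ} {w : M}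
    (hw : w ∈ Module.End.eigenspace (e 0) μ) :
    e j w ∈ Module.End.eigenspace (e 0) (μ + j) := by
  rw [Module.End.mem_eigenspace_iff] at hw ⊢
  rw [he.apply_apply_of_abs_le_one (by norm_num), hw, map_smul, zero_add, Int.cast_zero,
    sub_zero, add_smul]

theorem vseqSum_mem_eigenspace (he : IsVirasoroAction c e) {w : ℕ → M} {μ : ℂ} {k : ℕ}
    (hw : ∀ i < k, w i ∈ Module.End.eigenspace (e 0) (μ + i)) :
    vseqSum p t e w k ∈ Module.End.eigenspace (e 0) (μ + k) := by
  refine Submodule.sum_mem _ fun j hj => Submodule.smul_mem _ _ ?_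
  rw [mem_Icc] at hj
  convert he.apply_mem_eigenspace j (hw (k - j) (by omega)) using 2
  push_cast [hj.2]
  ring

theorem mem_eigenspace_of_eq_smul_vseqSum (he : IsVirasoroAction c e) {w : ℕ → M} {μ : ℂ}
    {N : ℕ} (s : ℕ → ℂ) (h0 : w 0 ∈ Module.End.eigenspace (e 0) μ)
    (hrec : ∀ k, 1 ≤ k → k ≤ N → w k = s k • vseqSum p t e w k) :
    ∀ k ≤ N, w k ∈ Module.End.eigenspace (e 0) (μ + k) := by
  intro k
  induction k using Nat.strong_induction_on with
  | _ k ih =>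
    intro hk
    rcases Nat.eq_zero_or_pos k with rfl | hk1
    · simpa using h0
    · rw [hrec k hk1 hk]
      exact Submodule.smul_mem _ _ (he.vseqSum_mem_eigenspace fun i hi => ih i hi (by omega))

theorem neg_one_apply_vseqSum_succ (he : IsVirasoroAction c e) {w : ℕ → M} {m : ℕ}
    (h0 : e (-1) (w 0) = 0)
    (ih : ∀ i, 1 ≤ i → i ≤ m → e (-1) (w i) = (-((p : ℂ) + 2 - i + 3*t)) • w (i - 1)) :
    e (-1) (vseqSum p t e w (m + 1)) =
      (2 * vseqCoeff p t (m + 1) 1) • e 0 (w m) +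
        ((m : ℂ) + 2 - p - 3*t) • vseqSum p t e w m := by
  have hterm : ∀ i ∈ range (m + 1),
      e (-1) (vseqCoeff p t (m + 1) (i + 1) • e ((i + 1 : ℕ) : ℤ) (w (m + 1 - 1 - i))) =
        vseqCoeff p t (m + 1) (i + 1) • e ((i + 1 : ℕ) : ℤ) (e (-1) (w (m - i))) +
          (vseqCoeff p t (m + 1) (i + 1) * ((i : ℂ) + 2)) • e i (w (m - i)) := by
    intro i _
    rw [map_smul, he.neg_one_apply_apply, Nat.add_sub_cancel, smul_add, smul_smul,
      Nat.cast_succ, add_sub_cancel_right]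
    congr 2
    push_cast
    ring
  have hlower : ∀ i ∈ range m,
      vseqCoeff p t (m + 1) (i + 1) • e ((i + 1 : ℕ) : ℤ) (e (-1) (w (m - i))) =
        (vseqCoeff p t (m + 1) (i + 1) * (-((p : ℂ) + 2 - ((m : ℂ) - i) + 3*t))) •
          e ((i + 1 : ℕ) : ℤ) (w (m - 1 - i)) := by
    intro i hi
    rw [mem_range] at hi
    rw [ih (m - i) (by omega) (Nat.sub_le m i), Nat.cast_sub hi.le, map_smul, smul_smul,
      Nat.sub_right_comm]
  rw [vseqSum_eq_sum_range, map_sum, sum_congr rfl hterm, sum_add_distrib, sum_range_succ,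
    Nat.sub_self, h0, map_zero, smul_zero, add_zero, sum_congr rfl hlower, sum_range_succ',
    vseqSum_eq_sum_range, smul_sum, ← add_assoc, add_comm, ← sum_add_distrib]
  congr 1
  · simp [mul_comm]
  · refine sum_congr rfl fun i _ => ?_
    rw [smul_smul, ← vseqCoeff_mul_add, add_smul, Nat.sub_sub, add_comm 1 i]
    congr 2
    push_cast
    ring

end IsVirasoroAction

end Virasoro

theorem e_neg_one_on_vseq_general
    (p : ℕ) (t : ℂ) (ht : t ≠ 0)
    (htg : ∀ r : ℕ, 1 ≤ r → r ≤ 2*p - 1 → t ≠ (p : ℂ) - (r : ℂ))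
    (M : Type*) [AddCommGroup M] [Module ℂ M]
    (e : ℤ → M →ₗ[ℂ] M) (v : M)
    (hrel : ∀ i j : ℤ, ∀ m : M,
      e i (e j m) - e j (e i m) =
        ((j : ℂ) - (i : ℂ)) • e (i + j) m +
          (if i + j = 0 then (((j : ℂ) ^ 3 - (j : ℂ)) / 12) * (13 + 6*t + 6*t⁻¹) else 0) • m)
    (hv0 : e 0 v = (-(((p : ℂ) - 1 + t) * (t⁻¹ * ((p : ℂ) + 1) + 3)) / 4) • v)
    (hvneg : ∀ i : ℤ, i < 0 → e i v = 0)
    (vseq : ℕ → M)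
    (hseq0 : vseq 0 = v)
    (hrec : ∀ k : ℕ, 1 ≤ k → k ≤ 2*p - 1 →
      vseq k = (((k : ℂ) * (2*(p : ℂ) - (k : ℂ)) * ((k : ℂ) - (p : ℂ) - t))⁻¹ * (2*t)) •
        ∑ j ∈ Finset.Icc 1 k,
          (((j : ℂ) - 1) * (2*t - 1) + 2*(k : ℂ) - 2*(p : ℂ) - 1) • e (j : ℤ) (vseq (k - j))) :
    ∀ k : ℕ, 1 ≤ k → k ≤ 2*p - 1 →
      e (-1) (vseq k) = (-((p : ℂ) + 2 - (k : ℂ) + 3*t)) • vseq (k - 1) := by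
  have he : IsVirasoroAction (13 + 6*t + 6*t⁻¹) e := hrel
  have hrec_sum : ∀ k, 1 ≤ k → k ≤ 2*p - 1 →
      vseq k = ((vseqDenom p t k)⁻¹ * (2*t)) • vseqSum p t e vseq k := hrec
  have hden : ∀ k ≤ 2*p - 1, vseqDenom p t k • vseq k = (2*t) • vseqSum p t e vseq k := by
    intro k hk
    rcases Nat.eq_zero_or_pos k with rfl | hk1
    · simp [vseqDenom, vseqSum]
    · rw [hrec_sum k hk1 hk, smul_smul, ← mul_assoc,
        mul_inv_cancel₀ (vseqDenom_ne_zero htg hk1 hk), one_mul]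
  have hweight :=
    he.mem_eigenspace_of_eq_smul_vseqSum _ (hseq0 ▸ Module.End.mem_eigenspace_iff.mpr hv0) hrec_sum
  intro k
  induction k using Nat.strong_induction_on with
  | _ k ih =>
    intro hk1 hk2
    obtain ⟨m, rfl⟩ : ∃ m, k = m + 1 := ⟨k - 1, by omega⟩
    apply smul_right_injective M (vseqDenom_ne_zero htg hk1 hk2)
    dsimp only
    rw [← map_smul, hden _ hk2, map_smul,
      he.neg_one_apply_vseqSum_succ (hseq0 ▸ hvneg (-1) (by norm_num))
        fun i hi1 hi2 => ih i (by omega) hi1 (by omega),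
      Module.End.mem_eigenspace_iff.mp (hweight m (by omega)), smul_add,
      smul_comm (2*t) _ (vseqSum _ _ _ _ _), ← hden m (by omega)]
    simp only [smul_smul, ← add_smul]
    rw [vseqDenom_succ_mul ht, Nat.add_sub_cancel]

/-- With `v⁽⁰⁾ = v` and
`v⁽ᵏ⁾ = (2t Σ_{j=1}^{k} ((j-1)(2t-1) + 2k - 2p - 1) e_j v⁽ᵏ⁻ʲ⁾) / (k(2p-k)(k-p-t))`
for `1 ≤ k ≤ 2p-1`, in the Verma module `V(h,c)` with `c = 13 + 6t + 6t⁻¹` and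
`h = -((p-1+t)(t⁻¹(p+1)+3))/4`, one has `e₋₁ v⁽ᵏ⁾ = -(p+2-k+3t) v⁽ᵏ⁻¹⁾` for
`k = 1, …, 2p-1`. -/
theorem e_neg_one_on_vseq
    (p : ℕ) (hp : 0 < p) (t : ℂ) (ht : t ≠ 0)
    (htg : ∀ r : ℕ, 1 ≤ r → r ≤ 2*p - 1 → t ≠ (p : ℂ) - (r : ℂ))
    (M : Type*) [AddCommGroup M] [Module ℂ M]
    (e : ℤ → M →ₗ[ℂ] M) (v : M)
    (hrel : ∀ i j : ℤ, ∀ m : M,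
      e i (e j m) - e j (e i m) =
        ((j : ℂ) - (i : ℂ)) • e (i + j) m +
          (if i + j = 0 then (((j : ℂ) ^ 3 - (j : ℂ)) / 12) * (13 + 6*t + 6*t⁻¹) else 0) • m)
    (hv0 : e 0 v = (-(((p : ℂ) - 1 + t) * (t⁻¹ * ((p : ℂ) + 1) + 3)) / 4) • v)
    (hvneg : ∀ i : ℤ, i < 0 → e i v = 0)
    (vseq : ℕ → M)
    (hseq0 : vseq 0 = v)
    (hrec : ∀ k : ℕ, 1 ≤ k → k ≤ 2*p - 1 →
      vseq k = (((k : ℂ) * (2*(p : ℂ) - (k : ℂ)) * ((k : ℂ) - (p : ℂ) - t))⁻¹ * (2*t)) •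
        ∑ j ∈ Finset.Icc 1 k,
          (((j : ℂ) - 1) * (2*t - 1) + 2*(k : ℂ) - 2*(p : ℂ) - 1) • e (j : ℤ) (vseq (k - j))) :
    ∀ k : ℕ, 1 ≤ k → k ≤ 2*p - 1 →
      e (-1) (vseq k) = (-((p : ℂ) + 2 - (k : ℂ) + 3*t)) • vseq (k - 1) :=
  e_neg_one_on_vseq_general p t ht htg M e v hrel hv0 hvneg vseq hseq0 hrec
end

section
/- Let p be a positive integer and t a generic complex parameter, and define v^{(k)} as in the recursion v^{(0)} = v, v^{(k)} = (2t Σ_{j=1}^{k} ((j-1)(2t-1) + 2k - 2p - 1) e_j v^{(k-j)}) / (k(2p-k)(k-p-t)). Then the vector w = 2t Σ_{j=1}^{2p} ((j-1)(2t-1) + 2p - 1) e_j v^{(2p-j)} in V(h,c), with c = 13 + 6t + 6t^{-1} and h = -((p-1+t)(t^{-1}(p+1)+3))/4, satisfies e_{-1} w = 0 and e_{-2} w = 0, hence is a singular vector of degree 2p. -/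
/-!
By induction on `k`, each `v⁽ᵏ⁾` is an `e₀`-eigenvector of eigenvalue `h + k`, and
`e₋₁ v⁽ᵏ⁾ = a_k v⁽ᵏ⁻¹⁾`, `e₋₂ v⁽ᵏ⁾ = b_k v⁽ᵏ⁻²⁾` with `a_k = k - p - 2 - 3t`, `b_k = k - p - 4 - 5t`.
Write `S_k = Σ_{j=1}^k c_{k,j} e_j v⁽ᵏ⁻ʲ⁾`, so that the recursion reads `2t S_k = D_k v⁽ᵏ⁾`.
Commuting `e₋ᵣ` past the `e_j` and using the induction hypothesis, `e₋ᵣ S_k` becomes a multiple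
of `S_{k-r}` plus boundary terms in `v⁽ᵏ⁻ʳ⁾`; polynomial identities in the coefficients then
give `2t e₋₁ S_k = a_k D_k v⁽ᵏ⁻¹⁾` and `2t e₋₂ S_k = b_k D_k v⁽ᵏ⁻²⁾`. For `k < 2p` one divides
by `D_k ≠ 0` to continue the induction; at `k = 2p` we have `w = 2t S_{2p}` and `D_{2p} = 0`.
-/

open Finset

namespace VirasoroSingular

variable {M : Type*} [AddCommGroup M] [Module ℂ M]

def IsVirasoroAction (C : ℂ) (e : ℤ → M →ₗ[ℂ] M) : Prop :=
  ∀ i j : ℤ, ∀ m : M,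
    e i (e j m) - e j (e i m) =
      ((j : ℂ) - (i : ℂ)) • e (i + j) m +
        (if i + j = 0 then (((j : ℂ) ^ 3 - (j : ℂ)) / 12) * C else 0) • m

/-- `S_k` for the coefficients `c = c_{k,·}`: the recursion is `2t • S_k = D_k • v⁽ᵏ⁾`. -/
def recSum (e : ℤ → M →ₗ[ℂ] M) (u : ℕ → M) (c : ℕ → ℂ) (k : ℕ) : M :=
  ∑ j ∈ Icc 1 k, c j • e j (u (k - j))

@[simp]
theorem recSum_zero (e : ℤ → M →ₗ[ℂ] M) (u : ℕ → M) (c : ℕ → ℂ) : recSum e u c 0 = 0 := by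
  simp [recSum]

namespace IsVirasoroAction

variable {C : ℂ} {e : ℤ → M →ₗ[ℂ] M}

theorem lowering_comm (he : IsVirasoroAction C e) (r : ℕ) (j : ℤ) (m : M) :
    e (-r) (e j m) = e j (e (-r) m) + ((j : ℂ) + r) • e (j - r) m +
      (if j = r then ((r : ℂ) ^ 3 - r) / 12 * C else 0) • m := by
  have h := he (-r) j m
  rw [sub_eq_iff_eq_add'] at h
  rw [h, neg_add_eq_sub, add_assoc]
  push_cast
  congr 3
  · ring
  · by_cases hj : j = r
    · subst hj; simp
    · simp [hj, sub_eq_zero]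

theorem lowering_recSum (he : IsVirasoroAction C e) (r n : ℕ) (c l : ℕ → ℂ) (u : ℕ → M)
    (hl : ∀ m < r, l m = 0) (hu : ∀ m < n + r, e (-r) (u m) = l m • u (m - r)) :
    e (-r) (recSum e u c (n + r)) =
      ∑ j ∈ Icc 1 n, (c j * l (n + r - j) + (j + 2 * r) * c (j + r)) • e j (u (n - j)) +
      ∑ j ∈ Icc 1 r, (c j * (j + r)) • e (j - r) (u (n + r - j)) +
      (c r * (((r : ℂ) ^ 3 - r) / 12 * C)) • u n := by
  set κ : ℂ := ((r : ℂ) ^ 3 - r) / 12 * C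
  have hterm : ∀ j ∈ Icc 1 (n + r), e (-r) (c j • e j (u (n + r - j))) =
      (c j * l (n + r - j)) • e j (u (n + r - j - r)) +
        (c j * (j + r)) • e (j - r) (u (n + r - j)) +
        (if j = r then c r * κ else 0) • u (n + r - j) := by
    intro j hj
    have hj := mem_Icc.mp hj
    rw [map_smul, he.lowering_comm, hu _ (by omega), map_smul]
    simp only [Nat.cast_inj, Int.cast_natCast]
    split_ifs with hjr
    · subst hjr
      module
    · module
  have hlowered : ∑ j ∈ Icc 1 (n + r), (c j * l (n + r - j)) • e j (u (n + r - j - r)) =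
      ∑ j ∈ Icc 1 n, (c j * l (n + r - j)) • e j (u (n - j)) := by
    rw [← sum_subset (Icc_subset_Icc_right (Nat.le_add_right n r))]
    · refine sum_congr rfl fun j hj => ?_
      rw [show n + r - j - r = n - j by omega]
    · intro j hj hjn
      simp only [mem_Icc] at hj hjn
      rw [hl _ (by omega), mul_zero, zero_smul]
  have hshifted : ∑ j ∈ Icc 1 (n + r), (c j * (j + r)) • e (j - r) (u (n + r - j)) =
      ∑ j ∈ Icc 1 r, (c j * (j + r)) • e (j - r) (u (n + r - j)) +
        ∑ j ∈ Icc 1 n, ((j + 2 * r) * c (j + r)) • e j (u (n - j)) := by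
    have hIoc : ∀ k, Icc 1 k = Ioc 0 k := Icc_add_one_left_eq_Ioc 0
    have hshift : Ioc r (n + r) = (Ioc 0 n).map (addRightEmbedding r) := by
      rw [map_add_right_Ioc, zero_add]
    rw [hIoc, hIoc, hIoc, ← sum_Ioc_consecutive _ (Nat.zero_le r) (Nat.le_add_left r n), hshift,
      sum_map]
    congr 1
    refine sum_congr rfl fun j hj => ?_
    rw [addRightEmbedding_apply, show n + r - (j + r) = n - j by omega]
    push_cast
    rw [add_sub_cancel_right]
    congr 1
    ring
  have hcentral : ∑ j ∈ Icc 1 (n + r), (if j = r then c r * κ else 0) • u (n + r - j) =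
      (c r * κ) • u n := by
    simp only [ite_smul, zero_smul]
    rw [sum_ite_eq']
    rcases Nat.eq_zero_or_pos r with rfl | hr
    · simp [κ]
    · rw [if_pos (mem_Icc.mpr ⟨hr, Nat.le_add_left r n⟩), Nat.add_sub_cancel]
  rw [recSum, map_sum, sum_congr rfl hterm, sum_add_distrib, sum_add_distrib, hlowered,
    hshifted, hcentral, add_comm (∑ j ∈ Icc 1 r, _), ← add_assoc, ← sum_add_distrib]
  simp only [add_smul]

end IsVirasoroAction

def recCoeff (p : ℕ) (t : ℂ) (k j : ℕ) : ℂ :=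
  ((j : ℂ) - 1) * (2 * t - 1) + 2 * (k : ℂ) - 2 * (p : ℂ) - 1

def recDenom (p : ℕ) (t : ℂ) (k : ℕ) : ℂ :=
  (k : ℂ) * (2 * (p : ℂ) - (k : ℂ)) * ((k : ℂ) - (p : ℂ) - t)

noncomputable def highestWeight (p : ℕ) (t : ℂ) : ℂ :=
  -(((p : ℂ) - 1 + t) * (t⁻¹ * ((p : ℂ) + 1) + 3)) / 4

noncomputable def centralCharge (t : ℂ) : ℂ := 13 + 6 * t + 6 * t⁻¹

/- The factors vanish where `m - 1`, resp. `m - 2`, truncates, so that `HasLoweringAt … 0`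
says `e₋₁ v = e₋₂ v = 0`. -/
def negOneFactor (p : ℕ) (t : ℂ) (m : ℕ) : ℂ := if m < 1 then 0 else (m : ℂ) - p - 2 - 3 * t

def negTwoFactor (p : ℕ) (t : ℂ) (m : ℕ) : ℂ := if m < 2 then 0 else (m : ℂ) - p - 4 - 5 * t

variable {p : ℕ} {t : ℂ}

theorem recDenom_ne_zero (htg : ∀ r : ℕ, 1 ≤ r → r ≤ 2 * p - 1 → t ≠ (p : ℂ) - (r : ℂ))
    {k : ℕ} (hk1 : 1 ≤ k) (hk : k ≤ 2 * p - 1) : recDenom p t k ≠ 0 := by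
  have hcast : ((2 * p - k : ℕ) : ℂ) = 2 * p - k := by
    rw [Nat.cast_sub (by omega)]
    push_cast
    ring
  refine mul_ne_zero (mul_ne_zero (by exact_mod_cast (by omega : k ≠ 0)) ?_) ?_
  · rw [← hcast]
    exact_mod_cast (by omega : 2 * p - k ≠ 0)
  · have := htg (2 * p - k) (by omega) (by omega)
    rw [hcast] at this
    contrapose! this
    linear_combination -this

theorem recDenom_two_mul_self : recDenom p t (2 * p) = 0 := by
  simp [recDenom]

theorem recCoeff_neg_one {n j : ℕ} (hj : j ≤ n) :
    recCoeff p t (n + 1) j * negOneFactor p t (n + 1 - j) + (j + 2) * recCoeff p t (n + 1) (j + 1) =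
      (n - p + 2 - 3 * t) * recCoeff p t n j := by
  rw [negOneFactor, if_neg (by omega), Nat.cast_sub (by omega), recCoeff, recCoeff, recCoeff]
  push_cast
  ring

theorem recCoeff_neg_two {n j : ℕ} (hj : j ≤ n) :
    recCoeff p t (n + 2) j * negTwoFactor p t (n + 2 - j) + (j + 4) * recCoeff p t (n + 2) (j + 2) =
      (n - p + 4 - 5 * t) * recCoeff p t n j := by
  rw [negTwoFactor, if_neg (by omega), Nat.cast_sub (by omega), recCoeff, recCoeff, recCoeff]
  push_cast
  ring

theorem recDenom_neg_one (ht : t ≠ 0) (n : ℕ) :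
    (n - p + 2 - 3 * t) * recDenom p t n +
        2 * t * (2 * recCoeff p t (n + 1) 1 * (highestWeight p t + n)) =
      negOneFactor p t (n + 1) * recDenom p t (n + 1) := by
  rw [negOneFactor, if_neg (by omega), recDenom, recDenom, recCoeff, highestWeight]
  push_cast
  field_simp
  ring

theorem recDenom_neg_two (ht : t ≠ 0) (n : ℕ) :
    (n - p + 4 - 5 * t) * recDenom p t n +
        2 * t * (3 * recCoeff p t (n + 2) 1 * negOneFactor p t (n + 1) +
          4 * recCoeff p t (n + 2) 2 * (highestWeight p t + n) +
          recCoeff p t (n + 2) 2 * (centralCharge t / 2)) =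
      negTwoFactor p t (n + 2) * recDenom p t (n + 2) := by
  rw [negOneFactor, negTwoFactor, if_neg (by omega), if_neg (by omega), recDenom, recDenom,
    recCoeff, recCoeff, highestWeight, centralCharge]
  push_cast
  field_simp
  ring

section Lowering

variable {C : ℂ} {e : ℤ → M →ₗ[ℂ] M} {u : ℕ → M}

theorem zero_recSum (he : IsVirasoroAction C e) (c : ℕ → ℂ) (h : ℂ) (k : ℕ)
    (h0 : ∀ m < k, e 0 (u m) = (h + m) • u m) :
    e 0 (recSum e u c k) = (h + k) • recSum e u c k := by
  have hlow := he.lowering_recSum 0 k c (fun m => h + m) u (by simp) (by simpa using h0)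
  simp only [CharP.cast_eq_zero, neg_zero, add_zero, mul_zero, sub_zero, ne_eq,
    OfNat.ofNat_ne_zero, not_false_eq_true, zero_pow, zero_div, zero_mul, zero_smul,
    Icc_eq_empty_of_lt zero_lt_one, sum_empty] at hlow
  rw [hlow, recSum, smul_sum]
  refine sum_congr rfl fun j hj => ?_
  rw [smul_smul, Nat.cast_sub (mem_Icc.mp hj).2]
  congr 1
  ring

theorem neg_one_recSum (he : IsVirasoroAction C e) (ht : t ≠ 0) (n : ℕ)
    (h0 : e 0 (u n) = (highestWeight p t + n) • u n)
    (h1 : ∀ m < n + 1, e (-1) (u m) = negOneFactor p t m • u (m - 1))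
    (hS : (2 * t) • recSum e u (recCoeff p t n) n = recDenom p t n • u n) :
    (2 * t) • e (-1) (recSum e u (recCoeff p t (n + 1)) (n + 1)) =
      (negOneFactor p t (n + 1) * recDenom p t (n + 1)) • u n := by
  have hlow := he.lowering_recSum 1 n (recCoeff p t (n + 1)) (negOneFactor p t) u
    (fun m hm => by simp [negOneFactor, hm]) (by simpa using h1)
  simp only [Nat.cast_one, mul_one, Icc_self, sum_singleton, sub_self, one_pow, zero_div,
    zero_mul, mul_zero, zero_smul, add_zero, Nat.add_sub_cancel] at hlow
  have hmain : ∑ j ∈ Icc 1 n, (recCoeff p t (n + 1) j * negOneFactor p t (n + 1 - j) +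
      (j + 2) * recCoeff p t (n + 1) (j + 1)) • e j (u (n - j)) =
      ((n : ℂ) - p + 2 - 3 * t) • recSum e u (recCoeff p t n) n := by
    rw [recSum, smul_sum]
    refine sum_congr rfl fun j hj => ?_
    rw [recCoeff_neg_one (mem_Icc.mp hj).2, smul_smul]
  rw [hlow, hmain, h0, smul_add, smul_comm, hS]
  match_scalars
  linear_combination recDenom_neg_one ht n

theorem neg_two_recSum (he : IsVirasoroAction (centralCharge t) e) (ht : t ≠ 0) (n : ℕ)
    (h0 : e 0 (u n) = (highestWeight p t + n) • u n)
    (h1 : e (-1) (u (n + 1)) = negOneFactor p t (n + 1) • u n)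
    (h2 : ∀ m < n + 2, e (-2) (u m) = negTwoFactor p t m • u (m - 2))
    (hS : (2 * t) • recSum e u (recCoeff p t n) n = recDenom p t n • u n) :
    (2 * t) • e (-2) (recSum e u (recCoeff p t (n + 2)) (n + 2)) =
      (negTwoFactor p t (n + 2) * recDenom p t (n + 2)) • u n := by
  have hlow := he.lowering_recSum 2 n (recCoeff p t (n + 2)) (negTwoFactor p t) u
    (fun m hm => by simp [negTwoFactor, hm]) (by simpa using h2)
  simp only [Nat.cast_ofNat, Int.reduceNeg, Nat.reduceAdd, Nat.one_le_ofNat, sum_Icc_succ_top,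
    Icc_self, sum_singleton, Nat.cast_one, Int.reduceSub, Nat.add_one_sub_one, sub_self,
    add_tsub_cancel_right] at hlow
  have hmain : ∑ j ∈ Icc 1 n, (recCoeff p t (n + 2) j * negTwoFactor p t (n + 2 - j) +
      (j + 2 * 2) * recCoeff p t (n + 2) (j + 2)) • e j (u (n - j)) =
      ((n : ℂ) - p + 4 - 5 * t) • recSum e u (recCoeff p t n) n := by
    rw [recSum, smul_sum]
    refine sum_congr rfl fun j hj => ?_
    rw [smul_smul, ← recCoeff_neg_two (mem_Icc.mp hj).2]
    congr 1
    ring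
  rw [hlow, hmain, h0, h1, smul_add, smul_add, smul_comm, hS]
  match_scalars
  linear_combination recDenom_neg_two ht n

theorem neg_two_recSum_one (he : IsVirasoroAction C e) (c : ℕ → ℂ)
    (h1 : e (-1) (u 0) = 0) (h2 : e (-2) (u 0) = 0) :
    e (-2) (recSum e u c 1) = 0 := by
  have hcomm := he.lowering_comm 2 1 (u 0)
  simp only [Nat.cast_ofNat, Int.reduceNeg, Int.reduceSub, h1, h2] at hcomm
  simp [recSum, hcomm]

end Lowering

def HasLoweringAt (e : ℤ → M →ₗ[ℂ] M) (p : ℕ) (t : ℂ) (u : ℕ → M) (k : ℕ) : Prop :=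
  e 0 (u k) = (highestWeight p t + k) • u k ∧
    e (-1) (u k) = negOneFactor p t k • u (k - 1) ∧
    e (-2) (u k) = negTwoFactor p t k • u (k - 2)

section Recursion

variable {e : ℤ → M →ₗ[ℂ] M} {u : ℕ → M}

theorem recSum_lowering (he : IsVirasoroAction (centralCharge t) e) (ht : t ≠ 0) (k : ℕ)
    (hu : ∀ m < k, HasLoweringAt e p t u m)
    (hS : ∀ m < k, (2 * t) • recSum e u (recCoeff p t m) m = recDenom p t m • u m) :
    e 0 (recSum e u (recCoeff p t k) k) =
        (highestWeight p t + k) • recSum e u (recCoeff p t k) k ∧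
      (2 * t) • e (-1) (recSum e u (recCoeff p t k) k) =
        (negOneFactor p t k * recDenom p t k) • u (k - 1) ∧
      (2 * t) • e (-2) (recSum e u (recCoeff p t k) k) =
        (negTwoFactor p t k * recDenom p t k) • u (k - 2) := by
  refine ⟨zero_recSum he _ _ k fun m hm => (hu m hm).1, ?_, ?_⟩
  · rcases k with _ | n
    · simp [recDenom]
    · exact neg_one_recSum he ht n (hu n (by omega)).1 (fun m hm => (hu m hm).2.1)
        (hS n (by omega))
  · rcases k with _ | _ | n
    · simp [recDenom]
    · have hv := hu 0 one_pos
      simp [neg_two_recSum_one he _ (by simpa [negOneFactor] using hv.2.1)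
        (by simpa [negTwoFactor] using hv.2.2), negTwoFactor]
    · exact neg_two_recSum he ht n (hu n (by omega)).1 (by simpa using (hu (n + 1) (by omega)).2.1)
        (fun m hm => (hu m hm).2.2) (hS n (by omega))

theorem hasLoweringAt_of_recSum (he : IsVirasoroAction (centralCharge t) e) (ht : t ≠ 0)
    (N : ℕ) (hv : HasLoweringAt e p t u 0)
    (hS : ∀ m ≤ N, (2 * t) • recSum e u (recCoeff p t m) m = recDenom p t m • u m)
    (hD : ∀ m, 1 ≤ m → m ≤ N → recDenom p t m ≠ 0) :
    ∀ k ≤ N, HasLoweringAt e p t u k := by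
  intro k
  induction k using Nat.strong_induction_on with
  | _ k ih =>
    intro hk
    rcases Nat.eq_zero_or_pos k with rfl | hk1
    · exact hv
    obtain ⟨h0, h1, h2⟩ := recSum_lowering he ht k (fun m hm => ih m hm (by omega))
      (fun m hm => hS m (by omega))
    have hcancel : ∀ (f : M →ₗ[ℂ] M) (y : M),
        (2 * t) • f (recSum e u (recCoeff p t k) k) = recDenom p t k • y → f (u k) = y :=
      fun f y hf => smul_right_injective M (hD k hk1 hk) <| by
        dsimp only
        rw [← map_smul, ← hS k hk, map_smul, hf]
    refine ⟨hcancel _ _ ?_, hcancel _ _ ?_, hcancel _ _ ?_⟩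
    · rw [h0, smul_comm, hS k hk, smul_comm]
    · rw [h1, mul_comm, smul_smul]
    · rw [h2, mul_comm, smul_smul]

theorem smul_recSum_eq_of_recursion {N : ℕ} (hD : ∀ m, 1 ≤ m → m ≤ N → recDenom p t m ≠ 0)
    (hrec : ∀ k, 1 ≤ k → k ≤ N →
      u k = ((recDenom p t k)⁻¹ * (2 * t)) • recSum e u (recCoeff p t k) k) :
    ∀ k ≤ N, (2 * t) • recSum e u (recCoeff p t k) k = recDenom p t k • u k := by
  intro k hk
  rcases Nat.eq_zero_or_pos k with rfl | hk1
  · simp [recDenom]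
  · rw [hrec k hk1 hk, smul_smul, ← mul_assoc, mul_inv_cancel₀ (hD k hk1 hk), one_mul]

end Recursion

end VirasoroSingular

open VirasoroSingular

theorem w_is_singular_degree_2p_general
    (p : ℕ) (t : ℂ) (ht : t ≠ 0)
    (htg : ∀ r : ℕ, 1 ≤ r → r ≤ 2*p - 1 → t ≠ (p : ℂ) - (r : ℂ))
    (M : Type*) [AddCommGroup M] [Module ℂ M]
    (e : ℤ → M →ₗ[ℂ] M) (v : M)
    (hrel : ∀ i j : ℤ, ∀ m : M,
      e i (e j m) - e j (e i m) =
        ((j : ℂ) - (i : ℂ)) • e (i + j) m +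
          (if i + j = 0 then (((j : ℂ) ^ 3 - (j : ℂ)) / 12) * (13 + 6*t + 6*t⁻¹) else 0) • m)
    (hv0 : e 0 v = (-(((p : ℂ) - 1 + t) * (t⁻¹ * ((p : ℂ) + 1) + 3)) / 4) • v)
    (hvneg : ∀ i : ℤ, i < 0 → e i v = 0)
    (vseq : ℕ → M)
    (hseq0 : vseq 0 = v)
    (hrec : ∀ k : ℕ, 1 ≤ k → k ≤ 2*p - 1 →
      vseq k = (((k : ℂ) * (2*(p : ℂ) - (k : ℂ)) * ((k : ℂ) - (p : ℂ) - t))⁻¹ * (2*t)) •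
        ∑ j ∈ Finset.Icc 1 k,
          (((j : ℂ) - 1) * (2*t - 1) + 2*(k : ℂ) - 2*(p : ℂ) - 1) • e (j : ℤ) (vseq (k - j))) :
    ∀ w : M,
      w = (2*t) • ∑ j ∈ Finset.Icc 1 (2*p),
        (((j : ℂ) - 1) * (2*t - 1) + 2*(p : ℂ) - 1) • e (j : ℤ) (vseq (2*p - j)) →
      e (-1) w = 0 ∧ e (-2) w = 0 := by
  intro w hw
  have hD : ∀ k, 1 ≤ k → k ≤ 2 * p - 1 → recDenom p t k ≠ 0 := fun _ => recDenom_ne_zero htg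
  have hS := smul_recSum_eq_of_recursion hD hrec
  have hv : HasLoweringAt e p t vseq 0 :=
    ⟨by simpa [hseq0, highestWeight] using hv0, by simp [hseq0, hvneg, negOneFactor],
      by simp [hseq0, hvneg, negTwoFactor]⟩
  have hlow := hasLoweringAt_of_recSum hrel ht (2 * p - 1) hv hS hD
  obtain ⟨-, h1, h2⟩ := recSum_lowering hrel ht (2 * p) (fun m hm => hlow m (by omega))
    (fun m hm => hS m (by omega))
  have hw' : w = (2 * t) • recSum e vseq (recCoeff p t (2 * p)) (2 * p) := by
    rw [hw, recSum]
    congr 1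
    refine sum_congr rfl fun j _ => ?_
    congr 1
    rw [recCoeff]
    push_cast
    ring
  rw [recDenom_two_mul_self, mul_zero, zero_smul] at h1 h2
  rw [hw', map_smul, map_smul]
  exact ⟨h1, h2⟩

/-- With `v⁽⁰⁾ = v` and
`v⁽ᵏ⁾ = (2t Σ_{j=1}^{k} ((j-1)(2t-1) + 2k - 2p - 1) e_j v⁽ᵏ⁻ʲ⁾) / (k(2p-k)(k-p-t))`
for `1 ≤ k ≤ 2p-1`, in the Verma module `V(h,c)` with `c = 13 + 6t + 6t⁻¹` and
`h = -((p-1+t)(t⁻¹(p+1)+3))/4`, the vector `w = 2t Σ_{j=1}^{2p} ((j-1)(2t-1) + 2p - 1) e_j v⁽²ᵖ⁻ʲ⁾` satisfies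
`e₋₁ w = 0` and `e₋₂ w = 0`, hence is a singular vector of degree `2p`. -/
theorem w_is_singular_degree_2p
    (p : ℕ) (hp : 0 < p) (t : ℂ) (ht : t ≠ 0)
    (htg : ∀ r : ℕ, 1 ≤ r → r ≤ 2*p - 1 → t ≠ (p : ℂ) - (r : ℂ))
    (M : Type*) [AddCommGroup M] [Module ℂ M]
    (e : ℤ → M →ₗ[ℂ] M) (v : M)
    (hrel : ∀ i j : ℤ, ∀ m : M,
      e i (e j m) - e j (e i m) =
        ((j : ℂ) - (i : ℂ)) • e (i + j) m +
          (if i + j = 0 then (((j : ℂ) ^ 3 - (j : ℂ)) / 12) * (13 + 6*t + 6*t⁻¹) else 0) • m)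
    (hv0 : e 0 v = (-(((p : ℂ) - 1 + t) * (t⁻¹ * ((p : ℂ) + 1) + 3)) / 4) • v)
    (hvneg : ∀ i : ℤ, i < 0 → e i v = 0)
    (vseq : ℕ → M)
    (hseq0 : vseq 0 = v)
    (hrec : ∀ k : ℕ, 1 ≤ k → k ≤ 2*p - 1 →
      vseq k = (((k : ℂ) * (2*(p : ℂ) - (k : ℂ)) * ((k : ℂ) - (p : ℂ) - t))⁻¹ * (2*t)) •
        ∑ j ∈ Finset.Icc 1 k,
          (((j : ℂ) - 1) * (2*t - 1) + 2*(k : ℂ) - 2*(p : ℂ) - 1) • e (j : ℤ) (vseq (k - j))) :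
    ∀ w : M,
      w = (2*t) • ∑ j ∈ Finset.Icc 1 (2*p),
        (((j : ℂ) - 1) * (2*t - 1) + 2*(p : ℂ) - 1) • e (j : ℤ) (vseq (2*p - j)) →
      e (-1) w = 0 ∧ e (-2) w = 0 :=
  w_is_singular_degree_2p_general p t ht htg M e v hrel hv0 hvneg vseq hseq0 hrec
end

section
/- For p = 2, the element S_{2,2}(t) = e_1⁴ + 4t e_1 e_2 e_1 + ((1-t²)/t)(e_1² e_2 + e_2 e_1²) + ((1-t²)²/t²) e_2² + ((1+t)(4t-1)/t) e_1 e_3 + ((1-t)(4t+1)/t) e_3 e_1 + (3(1-t²)/t) e_4, applied to the highest weight vector v of V(h,c) with c = 13 + 6t + 6t^{-1} and h = -((1+t)(3t^{-1}+3))/4 = -(3/4)(t + 2 + t^{-1}), yields a vector annihilated by e_{-1} and e_{-2}. -/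
/-!
Commuting `e₂, e₃` past `e₁` (`[e₂,e₁] = -e₃`, `[e₃,e₁] = -2e₄`) puts `S₂,₂(t) v` in PBW normal
order, and there its coefficients depend on `t` only through `s = t + t⁻¹`:
`e₁⁴ + 2s e₁²e₂ + (6 - 2s) e₁e₃ + (s² - 4) e₂² + 3(s - 2) e₄`; likewise `c = 13 + 6s` and
`h = -(3/4)(s + 2)`. Moving `e₋₁` and `e₋₂` to the right through this vector lands in the span of
`e₁³v, e₁e₂v, e₃v`, resp. `e₁²v, e₂v`, with coefficients polynomial in `s` that vanish identically.
-/

section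

variable {K M : Type*} [Field K] [AddCommGroup M] [Module K M]

def VirasoroRel (e : ℤ → M →ₗ[K] M) (c : K) : Prop :=
  ∀ i j : ℤ, ∀ m : M, e i (e j m) - e j (e i m) =
    ((j : K) - (i : K)) • e (i + j) m +
      (if i + j = 0 then (((j : K) ^ 3 - (j : K)) / 12) * c else 0) • m

def S22 (e : ℤ → M →ₗ[K] M) (t : K) (v : M) : M :=
  e 1 (e 1 (e 1 (e 1 v)))
    + (4 * t) • e 1 (e 2 (e 1 v))
    + ((1 - t ^ 2) / t) • (e 1 (e 1 (e 2 v)) + e 2 (e 1 (e 1 v)))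
    + ((1 - t ^ 2) ^ 2 / t ^ 2) • e 2 (e 2 v)
    + ((1 + t) * (4 * t - 1) / t) • e 1 (e 3 v)
    + ((1 - t) * (4 * t + 1) / t) • e 3 (e 1 v)
    + (3 * (1 - t ^ 2) / t) • e 4 v

def normalS22 (e : ℤ → M →ₗ[K] M) (s : K) (v : M) : M :=
  e 1 (e 1 (e 1 (e 1 v))) + (2 * s) • e 1 (e 1 (e 2 v)) + (6 - 2 * s) • e 1 (e 3 v)
    + (s ^ 2 - 4) • e 2 (e 2 v) + (3 * (s - 2)) • e 4 v

variable {e : ℤ → M →ₗ[K] M} {c h s : K} {v : M}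

theorem VirasoroRel.apply_apply (hrel : VirasoroRel e c) (i j : ℤ) (m : M) :
    e i (e j m) = e j (e i m) + ((j : K) - (i : K)) • e (i + j) m +
      (if i + j = 0 then (((j : K) ^ 3 - (j : K)) / 12) * c else 0) • m := by
  rw [add_assoc, ← hrel, add_sub_cancel]

theorem S22_eq_normalS22 (hrel : VirasoroRel e c) {t : K} (ht : t ≠ 0) :
    S22 e t v = normalS22 e (t + t⁻¹) v := by
  simp only [S22, normalS22, map_add, map_smul, hrel.apply_apply 2 1, hrel.apply_apply 3 1,
    Int.reduceAdd, Int.reduceEq, if_false, zero_smul, add_zero, smul_add, smul_smul]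
  match_scalars <;> field_simp <;> ring

variable [CharZero K]

-- The commutators are only supplied with a lowering or zero-mode operator on the left, or with
-- `e₂, e₃` in front of `e₁`, so the rewriting terminates in normal order.
theorem e_neg_one_normalS22 (hrel : VirasoroRel e c) (hv0 : e 0 v = h • v)
    (hv1 : e (-1) v = 0) (hh : h = -(3 / 4) * (s + 2)) :
    e (-1) (normalS22 e s v) = 0 := by
  simp only [normalS22, map_add, map_smul, hrel.apply_apply (-1), hrel.apply_apply 0,
    hrel.apply_apply 2 1, hv0, hv1, Int.reduceAdd, Int.reduceNeg, Int.reduceEq, if_true,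
    if_false, map_zero, add_zero, zero_add, smul_add, smul_smul, zero_smul]
  subst hh
  match_scalars <;> ring

theorem e_neg_two_normalS22 (hrel : VirasoroRel e c) (hv0 : e 0 v = h • v)
    (hv1 : e (-1) v = 0) (hv2 : e (-2) v = 0) (hh : h = -(3 / 4) * (s + 2))
    (hc : c = 13 + 6 * s) :
    e (-2) (normalS22 e s v) = 0 := by
  simp only [normalS22, map_add, map_smul, hrel.apply_apply (-2), hrel.apply_apply (-1),
    hrel.apply_apply 0, hv0, hv1, hv2, Int.reduceAdd, Int.reduceNeg, Int.reduceEq, if_true,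
    if_false, map_zero, add_zero, zero_add, smul_add, smul_smul, zero_smul, smul_zero]
  subst hh hc
  match_scalars <;> ring

end

/-- For `p = 2`, the element
`S₂,₂(t) = e₁⁴ + 4t e₁e₂e₁ + ((1-t²)/t)(e₁²e₂ + e₂e₁²) + ((1-t²)²/t²) e₂²
 + ((1+t)(4t-1)/t) e₁e₃ + ((1-t)(4t+1)/t) e₃e₁ + (3(1-t²)/t) e₄`
applied to the highest weight vector of `V(h,c)` with `c = 13 + 6t + 6t⁻¹` and
`h = -(3/4)(t + 2 + t⁻¹)` yields a vector annihilated by `e₋₁` and `e₋₂`. -/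
theorem S22_singular
    (t : ℂ) (ht : t ≠ 0)
    (M : Type*) [AddCommGroup M] [Module ℂ M]
    (e : ℤ → M →ₗ[ℂ] M) (v : M)
    (hrel : ∀ i j : ℤ, ∀ m : M,
      e i (e j m) - e j (e i m) =
        ((j : ℂ) - (i : ℂ)) • e (i + j) m +
          (if i + j = 0 then (((j : ℂ) ^ 3 - (j : ℂ)) / 12) * (13 + 6*t + 6*t⁻¹) else 0) • m)
    (hv0 : e 0 v = (-(3/4) * (t + 2 + t⁻¹)) • v)
    (hvneg : ∀ i : ℤ, i < 0 → e i v = 0) :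
    ∀ w : M,
      w = e 1 (e 1 (e 1 (e 1 v)))
        + (4*t) • e 1 (e 2 (e 1 v))
        + ((1 - t^2)/t) • (e 1 (e 1 (e 2 v)) + e 2 (e 1 (e 1 v)))
        + ((1 - t^2)^2/t^2) • e 2 (e 2 v)
        + ((1 + t)*(4*t - 1)/t) • e 1 (e 3 v)
        + ((1 - t)*(4*t + 1)/t) • e 3 (e 1 v)
        + (3*(1 - t^2)/t) • e 4 v →
      e (-1) w = 0 ∧ e (-2) w = 0 := by
  intro w hw
  have hrel : VirasoroRel e (13 + 6 * t + 6 * t⁻¹) := hrel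
  have hw : w = normalS22 e (t + t⁻¹) v := hw.trans (S22_eq_normalS22 hrel ht)
  have hv1 := hvneg (-1) (by norm_num)
  have hv2 := hvneg (-2) (by norm_num)
  subst hw
  exact ⟨e_neg_one_normalS22 hrel hv0 hv1 (by ring),
    e_neg_two_normalS22 hrel hv0 hv1 hv2 (by ring) (by ring)⟩
end

section
/- For a positive integer p and t ∈ ℂ nonzero, the coefficient of e_2^p in the expansion of S_{2,p}(t), given by f_p(2,...,2) with formula f_p(i_1,...,i_s) = ((2p-1)!)² (2t)^{s-2p} Π_{r=1}^{2p-1}(p-t-r) · Π_{m=1}^{s}(i_m(2t+1) + 2(p - t - Σ_{n=1}^{m} i_n)) / (Π_{l=0}^{2p-1}(2p-1-2l) · Π_{l=1}^{s-1}((Σ_{n=1}^{l} i_n)(2p - Σ_{n=1}^{l} i_n)(p - t - Σ_{n=1}^{l} i_n))), equals Π_{q=1}^{p}(t² - (p+1-2q)²)/t^p. -/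
/-!
Write `a_q = p + 1 - 2q`. Splitting `∏_{r=1}^{2p-1} (p - t - r)` by the parity of `r`, the odd
factors are `-(t - a_q)` and the even ones `p - t - 2l` cancel the last factor of the denominator;
the factors `2(2t+1) + 2(p - t - 2m)` are `2 (t + a_m)`. Everything else cancels:
`(2p-1)! = (2p-1)‼ (2p-2)‼` against `∏_{l=1}^{p-1} 2l (2p-2l) = (2p-2)‼²` and
`∏_{l=0}^{2p-1} (2p-1-2l) = (-1)^p (2p-1)‼²`, whose sign matches that of the odd factors,
and `2^p / (2t)^p = 1 / t^p`.
-/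

open Finset Nat

section CommMonoid

variable {M : Type*} [CommMonoid M]

theorem prod_Icc_one_eq_prod_range (f : ℕ → M) (n : ℕ) :
    ∏ i ∈ Icc 1 n, f i = ∏ i ∈ range n, f (i + 1) := by
  rw [← Ico_add_one_right_eq_Icc, prod_Ico_eq_prod_range]
  simp [add_comm]

theorem prod_Icc_one_reflect (f : ℕ → M) (n : ℕ) :
    ∏ i ∈ Icc 1 n, f (n + 1 - i) = ∏ i ∈ Icc 1 n, f i :=
  prod_nbij' (fun i => n + 1 - i) (fun i => n + 1 - i)
    (fun i hi => by simp only [mem_Icc] at hi ⊢; omega)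
    (fun i hi => by simp only [mem_Icc] at hi ⊢; omega)
    (fun i hi => by simp only [mem_Icc] at hi; omega)
    (fun i hi => by simp only [mem_Icc] at hi; omega)
    (fun _ _ => rfl)

theorem prod_Icc_one_two_mul_add_one (f : ℕ → M) (n : ℕ) :
    ∏ r ∈ Icc 1 (2 * n + 1), f r
      = (∏ q ∈ Icc 1 (n + 1), f (2 * q - 1)) * ∏ l ∈ Icc 1 n, f (2 * l) := by
  induction n with
  | zero => simp
  | succ n ih =>
    rw [show 2 * (n + 1) + 1 = 2 * n + 1 + 1 + 1 by ring,
      prod_Icc_succ_top (b := 2 * n + 1 + 1) (by omega),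
      prod_Icc_succ_top (b := 2 * n + 1) (by omega), ih,
      prod_Icc_succ_top (b := n + 1) (by omega) (fun q => f (2 * q - 1)),
      prod_Icc_succ_top (b := n) (by omega) (fun l => f (2 * l)),
      show 2 * (n + 1 + 1) - 1 = 2 * n + 1 + 1 + 1 by omega,
      show 2 * (n + 1) = 2 * n + 1 + 1 by ring]
    ac_rfl

theorem prod_Icc_one_two_mul_sub_one (f : ℕ → M) {p : ℕ} (hp : 0 < p) :
    ∏ r ∈ Icc 1 (2 * p - 1), f r
      = (∏ q ∈ Icc 1 p, f (2 * q - 1)) * ∏ l ∈ Icc 1 (p - 1), f (2 * l) := by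
  obtain ⟨n, rfl⟩ : ∃ n, p = n + 1 := ⟨p - 1, by omega⟩
  simpa [mul_add] using prod_Icc_one_two_mul_add_one f n

end CommMonoid

namespace Nat

theorem doubleFactorial_two_mul_sub_one (m : ℕ) : (2 * m - 1)‼ = ∏ i ∈ range m, (2 * i + 1) := by
  cases m with
  | zero => rfl
  | succ m =>
    rw [show 2 * (m + 1) - 1 = 2 * m + 1 by omega, doubleFactorial_eq_prod_odd, prod_range_succ']
    simp [mul_add]

theorem doubleFactorial_two_mul_eq_prod_Icc (k : ℕ) : (2 * k)‼ = ∏ l ∈ Icc 1 k, 2 * l := by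
  rw [doubleFactorial_eq_prod_even, prod_Icc_one_eq_prod_range]

theorem factorial_two_mul_sub_one {p : ℕ} (hp : 0 < p) :
    (2 * p - 1)! = (2 * p - 1)‼ * (2 * (p - 1))‼ := by
  rw [show 2 * p - 1 = 2 * (p - 1) + 1 by omega, factorial_eq_mul_doubleFactorial]

end Nat

section CommRing

variable {R : Type*} [CommRing R]

theorem prod_range_two_mul_sub_one_sub_two_mul (m : ℕ) :
    ∏ l ∈ range (2 * m), (2 * (m : R) - 1 - 2 * l) = (-1) ^ m * ((2 * m - 1)‼ : R) ^ 2 := by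
  have hlow : ∏ l ∈ range m, (2 * (m : R) - 1 - 2 * l) = ∏ i ∈ range m, (2 * (i : R) + 1) := by
    rw [← prod_range_reflect]
    refine prod_congr rfl fun l hl => ?_
    rw [Nat.cast_sub (by simp at hl; omega), Nat.cast_sub (by simp at hl; omega)]
    push_cast; ring
  have hhigh : ∏ i ∈ range m, (2 * (m : R) - 1 - 2 * (m + i : ℕ))
      = ∏ i ∈ range m, (-1) * (2 * (i : R) + 1) := by
    refine prod_congr rfl fun i _ => ?_
    push_cast; ring
  rw [two_mul m, prod_range_add, ← two_mul, hlow, hhigh, prod_mul_distrib, prod_const, card_range,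
    doubleFactorial_two_mul_sub_one]
  push_cast; ring

theorem prod_Icc_two_mul_mul_two_mul_sub (p : ℕ) :
    ∏ l ∈ Icc 1 (p - 1), (2 * (l : R) * (2 * (p : R) - 2 * l)) = ((2 * (p - 1))‼ : R) ^ 2 := by
  have hrefl : ∏ l ∈ Icc 1 (p - 1), (2 * (p : R) - 2 * l) = ∏ l ∈ Icc 1 (p - 1), 2 * (l : R) := by
    rw [← prod_Icc_one_reflect]
    refine prod_congr rfl fun l hl => ?_
    rw [mem_Icc] at hl
    rw [Nat.cast_sub (by omega), Nat.cast_add, Nat.cast_sub (by omega)]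
    push_cast; ring
  rw [prod_mul_distrib, hrefl, ← sq, doubleFactorial_two_mul_eq_prod_Icc]
  push_cast; rfl

theorem prod_Icc_natCast_sub_sub_natCast {p : ℕ} (hp : 0 < p) (t : R) :
    ∏ r ∈ Icc 1 (2 * p - 1), ((p : R) - t - r)
      = (-1) ^ p * (∏ q ∈ Icc 1 p, (t - ((p : R) + 1 - 2 * q)))
        * ∏ l ∈ Icc 1 (p - 1), ((p : R) - t - 2 * l) := by
  rw [prod_Icc_one_two_mul_sub_one _ hp]
  have hodd : ∏ q ∈ Icc 1 p, ((p : R) - t - (2 * q - 1 : ℕ))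
      = ∏ q ∈ Icc 1 p, (-1) * (t - ((p : R) + 1 - 2 * q)) := by
    refine prod_congr rfl fun q hq => ?_
    rw [Nat.cast_sub (by rw [mem_Icc] at hq; omega)]
    push_cast; ring
  rw [hodd, prod_mul_distrib, prod_const, card_Icc]
  push_cast; simp

theorem prod_Icc_two_mul_add_two_mul_sub (p : ℕ) (t : R) :
    ∏ m ∈ Icc 1 p, (2 * (2 * t + 1) + 2 * ((p : R) - t - 2 * m))
      = 2 ^ p * ∏ q ∈ Icc 1 p, (t + ((p : R) + 1 - 2 * q)) := by
  rw [show (2 : R) ^ p = ∏ _m ∈ Icc 1 p, 2 by simp, ← prod_mul_distrib]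
  exact prod_congr rfl fun m _ => by ring

end CommRing

/-- The coefficient of `e₂ᵖ` in the expansion of `S₂,ₚ(t)`, namely `f_p(2,…,2)` with the
general formula for `f_p(i₁,…,i_s)` instantiated at the composition `(2,…,2)` (of length
`s = p`, with partial sums `Σ_{n=1}^{m} i_n = 2m`), equals
`∏_{q=1}^{p} (t² - (p+1-2q)²) / tᵖ`. -/
theorem f_p_two_two (p : ℕ) (hp : 0 < p) (t : ℂ) (ht : t ≠ 0)
    (hden : ∀ l : ℕ, 1 ≤ l → l ≤ p - 1 → (p : ℂ) - t - 2*(l : ℂ) ≠ 0) :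
    ((Nat.factorial (2*p - 1) : ℂ))^2 * (2*t) ^ ((p : ℤ) - 2*(p : ℤ)) *
        (∏ r ∈ Finset.Icc 1 (2*p - 1), ((p : ℂ) - t - (r : ℂ))) *
        (∏ m ∈ Finset.Icc 1 p, (2*(2*t + 1) + 2*((p : ℂ) - t - 2*(m : ℂ)))) /
      ((∏ l ∈ Finset.range (2*p), (2*(p : ℂ) - 1 - 2*(l : ℂ))) *
        ∏ l ∈ Finset.Icc 1 (p - 1),
          ((2*(l : ℂ)) * (2*(p : ℂ) - 2*(l : ℂ)) * ((p : ℂ) - t - 2*(l : ℂ)))) =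
    (∏ q ∈ Finset.Icc 1 p, (t^2 - ((p : ℂ) + 1 - 2*(q : ℂ))^2)) / t^p := by
  have hY : ∏ l ∈ Icc 1 (p - 1), ((p : ℂ) - t - 2 * l) ≠ 0 :=
    prod_ne_zero_iff.2 fun l hl => hden l (mem_Icc.1 hl).1 (mem_Icc.1 hl).2
  have hodd : ((2 * p - 1)‼ : ℂ) ≠ 0 := Nat.cast_ne_zero.2 (doubleFactorial_pos _).ne'
  have heven : ((2 * (p - 1))‼ : ℂ) ≠ 0 := Nat.cast_ne_zero.2 (doubleFactorial_pos _).ne'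
  have hexp : (p : ℤ) - 2 * (p : ℤ) = -(p : ℤ) := by ring
  have hsq : ∏ q ∈ Icc 1 p, (t ^ 2 - ((p : ℂ) + 1 - 2 * q) ^ 2)
      = (∏ q ∈ Icc 1 p, (t - ((p : ℂ) + 1 - 2 * q))) *
        ∏ q ∈ Icc 1 p, (t + ((p : ℂ) + 1 - 2 * q)) := by
    rw [← prod_mul_distrib]
    exact prod_congr rfl fun q _ => by ring
  rw [hexp, zpow_neg, zpow_natCast, factorial_two_mul_sub_one hp,
    prod_Icc_natCast_sub_sub_natCast hp, prod_Icc_two_mul_add_two_mul_sub, prod_range_two_mul_sub_one_sub_two_mul, prod_mul_distrib,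
    prod_Icc_two_mul_mul_two_mul_sub, hsq]
  push_cast
  field_simp
  ring
end
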